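/- With notation as in the spatial regression loss, the map (β, R) ↦ ‖y − wR − sβ‖² is K-Lipschitz for the metric D((β,R),(β',R')) = √Q K_neighb K_Y ‖R − R'‖ + exp(K_X) ‖β − β'‖, where K = 2[K_Y + K_neighb K_Y Q^{3/2} + exp(K_X) α]; i.e., |‖y − wR − sβ‖² − ‖y − wR' − sβ'‖²| ≤ K·D((β,R),(β',R')). -/

import Mathlib

open Matrix

/-- Euclidean norm of a vector in `ℝ^k`. -/
noncomputable def eucNorm {k : ℕ} (v : Fin k → ℝ) : ℝ := Real.sqrt (∑ i, v i ^ 2)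

/-- Frobenius norm of a real matrix. -/
noncomputable def frobNorm {k l : ℕ} (M : Matrix (Fin k) (Fin l) ℝ) : ℝ :=
  Real.sqrt (∑ i, ∑ j, M i j ^ 2)

/-! Since `|a² − b²| = (a + b)|a − b|`, it suffices to bound the norms of both residuals by `K/2`
and their difference by `D`. Both follow from the triangle inequality and the Cauchy–Schwarz
bound `‖v M‖ ≤ ‖v‖ ‖M‖_F`, the residual being affine in `(β, R)`; the entry bound on `R` gives
`‖R‖_F ≤ Q`, whence the `Q^{3/2}`. -/

lemma abs_sq_sub_sq_le_mul {a b c d : ℝ} (ha : 0 ≤ a) (hb : 0 ≤ b)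
    (hab : a + b ≤ c) (hd : |a - b| ≤ d) : |a ^ 2 - b ^ 2| ≤ c * d := by
  rw [sq_sub_sq, abs_mul, abs_of_nonneg (add_nonneg ha hb)]
  exact mul_le_mul hab hd (abs_nonneg _) ((add_nonneg ha hb).trans hab)

lemma eucNorm_eq_norm {k : ℕ} (v : Fin k → ℝ) : eucNorm v = ‖WithLp.toLp 2 v‖ := by
  simp [eucNorm, EuclideanSpace.norm_eq, sq_abs]

lemma eucNorm_nonneg {k : ℕ} (v : Fin k → ℝ) : 0 ≤ eucNorm v := Real.sqrt_nonneg _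

lemma frobNorm_nonneg {k l : ℕ} (M : Matrix (Fin k) (Fin l) ℝ) : 0 ≤ frobNorm M :=
  Real.sqrt_nonneg _

lemma eucNorm_add_le {k : ℕ} (u v : Fin k → ℝ) : eucNorm (u + v) ≤ eucNorm u + eucNorm v := by
  simpa only [eucNorm_eq_norm, WithLp.toLp_add] using norm_add_le _ _

lemma eucNorm_sub_le {k : ℕ} (u v : Fin k → ℝ) : eucNorm (u - v) ≤ eucNorm u + eucNorm v := by
  simpa only [eucNorm_eq_norm, WithLp.toLp_sub] using norm_sub_le _ _

lemma abs_eucNorm_sub_eucNorm_le {k : ℕ} (u v : Fin k → ℝ) :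
    |eucNorm u - eucNorm v| ≤ eucNorm (u - v) := by
  simpa only [eucNorm_eq_norm, WithLp.toLp_sub] using abs_norm_sub_norm_le _ _

lemma eucNorm_vecMul_le {p q : ℕ} (s : Fin p → ℝ) (M : Matrix (Fin p) (Fin q) ℝ) :
    eucNorm (s ᵥ* M) ≤ eucNorm s * frobNorm M := by
  rw [eucNorm, eucNorm, frobNorm, ← Real.sqrt_mul (by positivity), Finset.sum_comm,
    Finset.mul_sum]
  refine Real.sqrt_le_sqrt ?_
  gcongr with j
  simpa only [vecMul, dotProduct] using Finset.sum_mul_sq_le_sq_mul_sq _ s (fun i => M i j)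

lemma frobNorm_le_sqrt_card_mul {k l : ℕ} (M : Matrix (Fin k) (Fin l) ℝ)
    (hM : ∀ i j, M i j ∈ Set.Icc (-1 : ℝ) 1) : frobNorm M ≤ √(k * l) := by
  refine Real.sqrt_le_sqrt ?_
  calc ∑ i, ∑ j, M i j ^ 2 ≤ ∑ _i : Fin k, ∑ _j : Fin l, (1 : ℝ) := by
        gcongr with i _ j
        exact sq_le_one_iff_abs_le_one _ |>.2 (abs_le.2 (hM i j))
    _ = k * l := by simp

def regressionResidual {p Q : ℕ} (y w : Fin Q → ℝ) (s : Fin p → ℝ)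
    (β : Matrix (Fin p) (Fin Q) ℝ) (R : Matrix (Fin Q) (Fin Q) ℝ) : Fin Q → ℝ :=
  y - w ᵥ* R - s ᵥ* β

section Residual

variable {p Q : ℕ} (y w : Fin Q → ℝ) (s : Fin p → ℝ)

lemma eucNorm_regressionResidual_le (β : Matrix (Fin p) (Fin Q) ℝ)
    (R : Matrix (Fin Q) (Fin Q) ℝ) :
    eucNorm (regressionResidual y w s β R) ≤
      eucNorm y + eucNorm w * frobNorm R + eucNorm s * frobNorm β :=
  calc eucNorm (regressionResidual y w s β R)
      ≤ eucNorm y + eucNorm (w ᵥ* R) + eucNorm (s ᵥ* β) :=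
        (eucNorm_sub_le _ _).trans (add_le_add_left (eucNorm_sub_le _ _) _)
    _ ≤ _ := by gcongr <;> exact eucNorm_vecMul_le _ _

lemma regressionResidual_sub (β β' : Matrix (Fin p) (Fin Q) ℝ)
    (R R' : Matrix (Fin Q) (Fin Q) ℝ) :
    regressionResidual y w s β' R' - regressionResidual y w s β R =
      w ᵥ* (R - R') + s ᵥ* (β - β') := by
  simp only [regressionResidual, vecMul_sub]
  abel

lemma abs_eucNorm_regressionResidual_sub_le (β β' : Matrix (Fin p) (Fin Q) ℝ)
    (R R' : Matrix (Fin Q) (Fin Q) ℝ) :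
    |eucNorm (regressionResidual y w s β R) - eucNorm (regressionResidual y w s β' R')| ≤
      eucNorm w * frobNorm (R - R') + eucNorm s * frobNorm (β - β') :=
  calc _ ≤ eucNorm (regressionResidual y w s β' R' - regressionResidual y w s β R) := by
        rw [abs_sub_comm]; exact abs_eucNorm_sub_eucNorm_le _ _
    _ ≤ eucNorm (w ᵥ* (R - R')) + eucNorm (s ᵥ* (β - β')) := by
        rw [regressionResidual_sub]; exact eucNorm_add_le _ _
    _ ≤ _ := by gcongr <;> exact eucNorm_vecMul_le _ _

end Residual

lemma rpow_three_halves_eq_mul_sqrt {x : ℝ} (hx : 0 ≤ x) : x ^ ((3 : ℝ) / 2) = x * √x := by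
  rw [show (3 : ℝ) / 2 = 1 + 1 / 2 by norm_num, Real.rpow_add' hx (by norm_num),
    Real.rpow_one, Real.sqrt_eq_rpow]

theorem stmt_12_general {Q p : ℕ} (y w : Fin Q → ℝ) (s : Fin p → ℝ)
    (β β' : Matrix (Fin p) (Fin Q) ℝ) (R R' : Matrix (Fin Q) (Fin Q) ℝ)
    (K_Y K_neighb K_X α : ℝ)
    (hy : eucNorm y ≤ K_Y)
    (hw : eucNorm w ≤ Real.sqrt Q * K_neighb * K_Y)
    (hs : eucNorm s ≤ Real.exp K_X)
    (hβ : frobNorm β ≤ α) (hβ' : frobNorm β' ≤ α)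
    (hR : ∀ q q', R q q' ∈ Set.Icc (-1 : ℝ) 1)
    (hR' : ∀ q q', R' q q' ∈ Set.Icc (-1 : ℝ) 1) :
    |eucNorm (fun j => y j - (w ᵥ* R) j - (s ᵥ* β) j) ^ 2 -
        eucNorm (fun j => y j - (w ᵥ* R') j - (s ᵥ* β') j) ^ 2| ≤
      (2 * (K_Y + K_neighb * K_Y * (Q : ℝ) ^ ((3 : ℝ) / 2) + Real.exp K_X * α)) *
        (Real.sqrt Q * K_neighb * K_Y * frobNorm (R - R') +
          Real.exp K_X * frobNorm (β - β')) := by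
  have hw₀ := eucNorm_nonneg w
  have hs₀ := eucNorm_nonneg s
  have bound : ∀ (β₀ : Matrix (Fin p) (Fin Q) ℝ) (R₀ : Matrix (Fin Q) (Fin Q) ℝ),
      frobNorm β₀ ≤ α → (∀ q q', R₀ q q' ∈ Set.Icc (-1 : ℝ) 1) →
      eucNorm (regressionResidual y w s β₀ R₀) ≤
        K_Y + K_neighb * K_Y * (Q : ℝ) ^ ((3 : ℝ) / 2) + Real.exp K_X * α := by
    intro β₀ R₀ hβ₀ hR₀
    have hR₀Q : frobNorm R₀ ≤ Q := by
      simpa [Real.sqrt_mul_self] using frobNorm_le_sqrt_card_mul R₀ hR₀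
    calc _ ≤ _ := eucNorm_regressionResidual_le y w s β₀ R₀
      _ ≤ K_Y + (Real.sqrt Q * K_neighb * K_Y) * Q + Real.exp K_X * α :=
        add_le_add (add_le_add hy (mul_le_mul hw hR₀Q (frobNorm_nonneg _) (hw₀.trans hw)))
          (mul_le_mul hs hβ₀ (frobNorm_nonneg _) (hs₀.trans hs))
      _ = _ := by rw [rpow_three_halves_eq_mul_sqrt (Nat.cast_nonneg Q)]; ring
  change |eucNorm (regressionResidual y w s β R) ^ 2 -
    eucNorm (regressionResidual y w s β' R') ^ 2| ≤ _
  refine abs_sq_sub_sq_le_mul (eucNorm_nonneg _) (eucNorm_nonneg _) ?_ ?_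
  · linarith [bound β R hβ hR, bound β' R' hβ' hR']
  · calc _ ≤ _ := abs_eucNorm_regressionResidual_sub_le y w s β β' R R'
      _ ≤ _ := by gcongr <;> exact frobNorm_nonneg _

/-- The map `(β, R) ↦ ‖y − wR − sβ‖²` is `K`-Lipschitz for the metric
`D((β,R),(β',R')) = √Q K_neighb K_Y ‖R − R'‖ + exp(K_X) ‖β − β'‖`, with
`K = 2[K_Y + K_neighb K_Y Q^{3/2} + exp(K_X) α]`. -/
theorem stmt_12 {Q p : ℕ} (y w : Fin Q → ℝ) (s : Fin p → ℝ)
    (β β' : Matrix (Fin p) (Fin Q) ℝ) (R R' : Matrix (Fin Q) (Fin Q) ℝ)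
    (K_Y K_neighb K_X α : ℝ)
    (hKY : 0 < K_Y) (hKn : 0 < K_neighb) (hα : 0 < α)
    (hy : eucNorm y ≤ K_Y)
    (hw : eucNorm w ≤ Real.sqrt Q * K_neighb * K_Y)
    (hs : eucNorm s ≤ Real.exp K_X)
    (hβ : frobNorm β ≤ α) (hβ' : frobNorm β' ≤ α)
    (hR : ∀ q q', R q q' ∈ Set.Icc (-1 : ℝ) 1)
    (hR' : ∀ q q', R' q q' ∈ Set.Icc (-1 : ℝ) 1) :
    |eucNorm (fun j => y j - (w ᵥ* R) j - (s ᵥ* β) j) ^ 2 -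
        eucNorm (fun j => y j - (w ᵥ* R') j - (s ᵥ* β') j) ^ 2| ≤
      (2 * (K_Y + K_neighb * K_Y * (Q : ℝ) ^ ((3 : ℝ) / 2) + Real.exp K_X * α)) *
        (Real.sqrt Q * K_neighb * K_Y * frobNorm (R - R') +
          Real.exp K_X * frobNorm (β - β')) :=
  stmt_12_general y w s β β' R R' K_Y K_neighb K_X α hy hw hs hβ hβ' hR hR'
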